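/- arXiv:2311.02172 — 7 statements merged into one kernel-verified Lean document; each statement's English description precedes it below -/
import Mathlib

section
/- Let μ be a compactly supported Borel probability measure on ℝ^d, let B ⊂ ℝ^d be a finite set, let ν be a probability distribution on B, let c : ℝ^d × ℝ^d → ℝ≥0 be a continuous ground cost, let δ > 0, and let w : B → ℝ be a weight function. Suppose τ = (τ_b)_{b∈B} is a transport plan from μ to ν such that for every b ∈ B, τ_b-almost every x ∈ ℝ^d has b as a δ-approximate weighted nearest neighbor with respect to w. Then τ is δ-close: for every transport plan τ' from μ to ν, ¢(τ) ≤ ¢(τ') + δ. -/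
/-!
Let `f x = min_b (c(x,b) - w(b))` be the weighted lower envelope. Every plan `σ` from `μ` to `ν`
pays at least `∫ f dμ + ∑_b w(b) ν(b)`, since `c(x,b) ≥ f x + w(b)` everywhere, while a plan
supported on `δ`-approximate weighted nearest neighbours pays at most `∫ f dμ + ∑_b w(b) ν(b) + δ`,
since there `c(x,b) ≤ f x + w(b) + δ` and the masses `ν(b)` add up to `1`.
-/

open MeasureTheory
open scoped ENNReal

noncomputable section

/-- A semi-discrete transport plan from a Borel probability measure `μ` on `ℝ^d` to the
discrete distribution `ν` supported on the finite set `B`: a family `(τ b)_{b ∈ B}` of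
measures with `∑ b ∈ B, τ b = μ` and `τ b univ = ν b` for every `b ∈ B`. -/
def IsSemiDiscretePlan {d : ℕ} (μ : Measure (EuclideanSpace ℝ (Fin d)))
    (B : Finset (EuclideanSpace ℝ (Fin d))) (ν : EuclideanSpace ℝ (Fin d) → ℝ≥0∞)
    (τ : EuclideanSpace ℝ (Fin d) → Measure (EuclideanSpace ℝ (Fin d))) : Prop :=
  (∑ b ∈ B, τ b) = μ ∧ ∀ b ∈ B, τ b Set.univ = ν b

/-- The cost `¢(τ) = ∑_{b ∈ B} ∫ c(x,b) dτ_b(x)` of a semi-discrete transport plan. -/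
def planCost {d : ℕ} (c : EuclideanSpace ℝ (Fin d) → EuclideanSpace ℝ (Fin d) → ℝ)
    (B : Finset (EuclideanSpace ℝ (Fin d)))
    (τ : EuclideanSpace ℝ (Fin d) → Measure (EuclideanSpace ℝ (Fin d))) : ℝ :=
  ∑ b ∈ B, ∫ x, c x b ∂(τ b)

section Integrals

variable {X ι : Type*} [MeasurableSpace X]

lemma Continuous.integrable_of_measure_compl_eq_zero [TopologicalSpace X]
    [OpensMeasurableSpace X] [T2Space X] {ρ : Measure X} [IsFiniteMeasure ρ] {K : Set X}
    (hK : IsCompact K) (hρK : ρ Kᶜ = 0) {g : X → ℝ} (hg : Continuous g) : Integrable g ρ := by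
  rw [← Measure.restrict_eq_self_of_ae_mem (ae_iff.2 hρK)]
  exact hg.continuousOn.integrableOn_compact hK

lemma integral_le_integral_add_const_mul {ρ : Measure X} [IsFiniteMeasure ρ] {g h : X → ℝ}
    (hg : Integrable g ρ) (hh : Integrable h ρ) {a : ℝ} (hgh : ∀ᵐ x ∂ρ, g x ≤ h x + a) :
    ∫ x, g x ∂ρ ≤ ∫ x, h x ∂ρ + a * ρ.real Set.univ := by
  calc ∫ x, g x ∂ρ ≤ ∫ x, h x + a ∂ρ := integral_mono_ae hg (hh.add (integrable_const a)) hgh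
    _ = ∫ x, h x ∂ρ + a * ρ.real Set.univ := by
      rw [integral_add hh (integrable_const a), integral_const, smul_eq_mul, mul_comm]

variable {B : Finset ι} {σ : ι → Measure X} {c : X → ι → ℝ}

lemma integral_inf'_add_le_sum_integral (hB : B.Nonempty) (w : ι → ℝ)
    (hfin : ∀ b ∈ B, IsFiniteMeasure (σ b)) (hc : ∀ b ∈ B, Integrable (c · b) (σ b))
    (hinf : ∀ b ∈ B, Integrable (fun x => B.inf' hB (fun b' => c x b' - w b')) (σ b)) :
    ∫ x, B.inf' hB (fun b' => c x b' - w b') ∂(∑ b ∈ B, σ b)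
        + ∑ b ∈ B, w b * (σ b).real Set.univ ≤ ∑ b ∈ B, ∫ x, c x b ∂(σ b) := by
  rw [integral_finsetSum_measure hinf, ← Finset.sum_add_distrib]
  refine Finset.sum_le_sum fun b hb => ?_
  have := hfin b hb
  have hle := integral_le_integral_add_const_mul (hinf b hb) (hc b hb) (a := -w b)
    (ae_of_all _ fun x => (Finset.inf'_le _ hb).trans_eq (sub_eq_add_neg _ _))
  linarith

lemma sum_integral_le_integral_inf'_add (hB : B.Nonempty) (w : ι → ℝ) (δ : ℝ)
    (hfin : ∀ b ∈ B, IsFiniteMeasure (σ b)) (hc : ∀ b ∈ B, Integrable (c · b) (σ b))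
    (hinf : ∀ b ∈ B, Integrable (fun x => B.inf' hB (fun b' => c x b' - w b')) (σ b))
    (hnear : ∀ b ∈ B, ∀ᵐ x ∂(σ b), c x b - w b ≤ B.inf' hB (fun b' => c x b' - w b') + δ) :
    ∑ b ∈ B, ∫ x, c x b ∂(σ b) ≤ ∫ x, B.inf' hB (fun b' => c x b' - w b') ∂(∑ b ∈ B, σ b)
        + ∑ b ∈ B, (w b + δ) * (σ b).real Set.univ := by
  rw [integral_finsetSum_measure hinf, ← Finset.sum_add_distrib]
  refine Finset.sum_le_sum fun b hb => ?_
  have := hfin b hb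
  exact integral_le_integral_add_const_mul (hc b hb) (hinf b hb)
    ((hnear b hb).mono fun x hx => by linarith)

end Integrals

namespace IsSemiDiscretePlan

variable {d : ℕ} {μ : Measure (EuclideanSpace ℝ (Fin d))} {B : Finset (EuclideanSpace ℝ (Fin d))}
  {ν : EuclideanSpace ℝ (Fin d) → ℝ≥0∞}
  {σ : EuclideanSpace ℝ (Fin d) → Measure (EuclideanSpace ℝ (Fin d))}
  {b : EuclideanSpace ℝ (Fin d)}

lemma le (hσ : IsSemiDiscretePlan μ B ν σ) (hb : b ∈ B) : σ b ≤ μ :=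
  hσ.1 ▸ Finset.single_le_sum (fun b _ => (σ b).zero_le) hb

lemma isFiniteMeasure (hσ : IsSemiDiscretePlan μ B ν σ) (hν : ∑ b ∈ B, ν b = 1) (hb : b ∈ B) :
    IsFiniteMeasure (σ b) :=
  ⟨by rw [hσ.2 b hb]; exact ENNReal.lt_top_of_sum_ne_top (hν ▸ ENNReal.one_ne_top) hb⟩

lemma integrable (hσ : IsSemiDiscretePlan μ B ν σ) (hν : ∑ b ∈ B, ν b = 1)
    {K : Set (EuclideanSpace ℝ (Fin d))} (hK : IsCompact K) (hμK : μ Kᶜ = 0) (hb : b ∈ B)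
    {g : EuclideanSpace ℝ (Fin d) → ℝ} (hg : Continuous g) : Integrable g (σ b) :=
  have := hσ.isFiniteMeasure hν hb
  hg.integrable_of_measure_compl_eq_zero hK (le_antisymm (hμK ▸ hσ.le hb Kᶜ) zero_le)

lemma sum_mul_measureReal_univ (hσ : IsSemiDiscretePlan μ B ν σ)
    (a : EuclideanSpace ℝ (Fin d) → ℝ) :
    ∑ b ∈ B, a b * (σ b).real Set.univ = ∑ b ∈ B, a b * (ν b).toReal :=
  Finset.sum_congr rfl fun b hb => by rw [measureReal_def, hσ.2 b hb]

end IsSemiDiscretePlan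

theorem delta_wnn_plan_is_delta_close_general {d : ℕ}
    (μ : Measure (EuclideanSpace ℝ (Fin d)))
    (hμc : ∃ K : Set (EuclideanSpace ℝ (Fin d)), IsCompact K ∧ μ Kᶜ = 0)
    (B : Finset (EuclideanSpace ℝ (Fin d))) (hB : B.Nonempty)
    (ν : EuclideanSpace ℝ (Fin d) → ℝ≥0∞) (hν : ∑ b ∈ B, ν b = 1)
    (c : EuclideanSpace ℝ (Fin d) → EuclideanSpace ℝ (Fin d) → ℝ)
    (hccont : Continuous fun p : EuclideanSpace ℝ (Fin d) × EuclideanSpace ℝ (Fin d) =>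
      c p.1 p.2)
    (δ : ℝ)
    (w : EuclideanSpace ℝ (Fin d) → ℝ)
    (τ : EuclideanSpace ℝ (Fin d) → Measure (EuclideanSpace ℝ (Fin d)))
    (hτ : IsSemiDiscretePlan μ B ν τ)
    (hWNN : ∀ b ∈ B, ∀ᵐ x ∂(τ b),
      c x b - w b ≤ B.inf' hB (fun b' => c x b' - w b') + δ) :
    ∀ τ' : EuclideanSpace ℝ (Fin d) → Measure (EuclideanSpace ℝ (Fin d)),
      IsSemiDiscretePlan μ B ν τ' → planCost c B τ ≤ planCost c B τ' + δ := by
  obtain ⟨K, hK, hμK⟩ := hμc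
  intro τ' hτ'
  have hcb : ∀ b, Continuous (c · b) := fun b => hccont.comp (.prodMk_left b)
  have hf : Continuous fun x => B.inf' hB (fun b' => c x b' - w b') :=
    .finset_inf'_apply hB fun b _ => (hcb b).sub continuous_const
  have hupper := sum_integral_le_integral_inf'_add hB w δ (fun b hb => hτ.isFiniteMeasure hν hb)
    (fun b hb => hτ.integrable hν hK hμK hb (hcb b)) (fun b hb => hτ.integrable hν hK hμK hb hf)
    hWNN
  have hlower := integral_inf'_add_le_sum_integral hB w (fun b hb => hτ'.isFiniteMeasure hν hb)
    (fun b hb => hτ'.integrable hν hK hμK hb (hcb b)) (fun b hb => hτ'.integrable hν hK hμK hb hf)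
  rw [hτ.1, hτ.sum_mul_measureReal_univ] at hupper
  rw [hτ'.1, hτ'.sum_mul_measureReal_univ] at hlower
  have hmass : ∑ b ∈ B, (ν b).toReal = 1 := by
    rw [← ENNReal.toReal_sum fun b hb => ENNReal.sum_ne_top.1 (hν ▸ ENNReal.one_ne_top) b hb,
      hν, ENNReal.toReal_one]
  have hshift : ∑ b ∈ B, (w b + δ) * (ν b).toReal = ∑ b ∈ B, w b * (ν b).toReal + δ := by
    simp only [add_mul, Finset.sum_add_distrib, ← Finset.mul_sum, hmass, mul_one]
  unfold planCost
  linarith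

/-- If `τ` is a transport plan from `μ` to `ν` such that for every `b ∈ B`, `τ_b`-almost
every `x` has `b` as a `δ`-approximate weighted nearest neighbor with respect to the weights
`w`, then `τ` is `δ`-close: `¢(τ) ≤ ¢(τ') + δ` for every transport plan `τ'`. -/
theorem delta_wnn_plan_is_delta_close {d : ℕ}
    (μ : Measure (EuclideanSpace ℝ (Fin d))) [IsProbabilityMeasure μ]
    (hμc : ∃ K : Set (EuclideanSpace ℝ (Fin d)), IsCompact K ∧ μ Kᶜ = 0)
    (B : Finset (EuclideanSpace ℝ (Fin d))) (hB : B.Nonempty)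
    (ν : EuclideanSpace ℝ (Fin d) → ℝ≥0∞) (hν : ∑ b ∈ B, ν b = 1)
    (c : EuclideanSpace ℝ (Fin d) → EuclideanSpace ℝ (Fin d) → ℝ)
    (hc0 : ∀ x y, 0 ≤ c x y)
    (hccont : Continuous fun p : EuclideanSpace ℝ (Fin d) × EuclideanSpace ℝ (Fin d) =>
      c p.1 p.2)
    (δ : ℝ) (hδ : 0 < δ)
    (w : EuclideanSpace ℝ (Fin d) → ℝ)
    (τ : EuclideanSpace ℝ (Fin d) → Measure (EuclideanSpace ℝ (Fin d)))
    (hτ : IsSemiDiscretePlan μ B ν τ)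
    (hWNN : ∀ b ∈ B, ∀ᵐ x ∂(τ b),
      c x b - w b ≤ B.inf' hB (fun b' => c x b' - w b') + δ) :
    ∀ τ' : EuclideanSpace ℝ (Fin d) → Measure (EuclideanSpace ℝ (Fin d)),
      IsSemiDiscretePlan μ B ν τ' → planCost c B τ ≤ planCost c B τ' + δ :=
  delta_wnn_plan_is_delta_close_general μ hμc B hB ν hν c hccont δ w τ hτ hWNN

end
end

section
/- Let B ⊂ ℝ^d be a finite set, let c : ℝ^d × ℝ^d → ℝ≥0 be a ground cost, and let δ > 0. Suppose a₁, a₂ ∈ ℝ^d are such that for every weight function w : B → ℝ whose values are nonnegative integer multiples of δ and every b ∈ B, b is a weighted nearest neighbor of a₁ with respect to w if and only if b is a weighted nearest neighbor of a₂ with respect to w. Then for every weight function w : B → ℝ whose values are nonnegative integer multiples of δ, every δ-approximate weighted nearest neighbor of a₁ with respect to w is also a δ-approximate weighted nearest neighbor of a₂ with respect to w. -/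
/-!
Raising the weight of `b` by `δ` turns "`b` is a `δ`-approximate weighted nearest neighbour for
`w`" into "`b` is a weighted nearest neighbour for `w + δ 𝟙_b`", and `w + δ 𝟙_b` again takes
values in `δℕ`. So the hypothesis, applied to `w + δ 𝟙_b`, carries the property from `a₁` to `a₂`.
-/

namespace Finset

variable {α : Type*}

theorem eq_inf'_iff_forall_le {s : Finset α} (hs : s.Nonempty) {b : α} (hb : b ∈ s)
    (f : α → ℝ) : f b = s.inf' hs f ↔ ∀ b' ∈ s, f b ≤ f b' := by
  rw [le_antisymm_iff, le_inf'_iff, and_iff_left (inf'_le f hb)]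

theorem sub_le_inf'_sub_add_iff_eq_inf'_sub_update [DecidableEq α] {s : Finset α}
    (hs : s.Nonempty) {b : α} (hb : b ∈ s) (g w : α → ℝ) {δ : ℝ} (hδ : 0 ≤ δ) :
    g b - w b ≤ s.inf' hs (fun b' => g b' - w b') + δ ↔
      g b - Function.update w b (w b + δ) b =
        s.inf' hs (fun b' => g b' - Function.update w b (w b + δ) b') := by
  rw [eq_inf'_iff_forall_le hs hb (fun b' => g b' - Function.update w b (w b + δ) b'),
    ← sub_le_iff_le_add, le_inf'_iff]
  refine forall₂_congr fun b' _ => ?_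
  rcases eq_or_ne b' b with rfl | hne
  · simp only [Function.update_self, le_refl, iff_true]
    linarith
  · simp only [Function.update_self, Function.update_of_ne hne]
    constructor <;> intro <;> linarith

end Finset

theorem exists_nat_mul_update_add {α : Type*} [DecidableEq α] {s : Finset α} {w : α → ℝ}
    {δ : ℝ} (hw : ∀ b ∈ s, ∃ k : ℕ, w b = k * δ) (b : α) :
    ∀ b' ∈ s, ∃ k : ℕ, Function.update w b (w b + δ) b' = k * δ := by
  intro b' hb'
  obtain ⟨k, hk⟩ := hw b' hb'
  rcases eq_or_ne b' b with rfl | hne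
  · exact ⟨k + 1, by simp only [Function.update_self, hk]; push_cast; ring⟩
  · exact ⟨k, by simp only [Function.update_of_ne hne, hk]⟩

theorem same_wnn_implies_same_approx_wnn_general {d : ℕ}
    (B : Finset (EuclideanSpace ℝ (Fin d))) (hB : B.Nonempty)
    (c : EuclideanSpace ℝ (Fin d) → EuclideanSpace ℝ (Fin d) → ℝ)
    (δ : ℝ) (hδ : 0 < δ)
    (a₁ a₂ : EuclideanSpace ℝ (Fin d))
    (hcell : ∀ w : EuclideanSpace ℝ (Fin d) → ℝ,
      (∀ b ∈ B, ∃ k : ℕ, w b = (k : ℝ) * δ) → ∀ b ∈ B,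
        (c a₁ b - w b = B.inf' hB (fun b' => c a₁ b' - w b') ↔
         c a₂ b - w b = B.inf' hB (fun b' => c a₂ b' - w b'))) :
    ∀ w : EuclideanSpace ℝ (Fin d) → ℝ,
      (∀ b ∈ B, ∃ k : ℕ, w b = (k : ℝ) * δ) → ∀ b ∈ B,
        c a₁ b - w b ≤ B.inf' hB (fun b' => c a₁ b' - w b') + δ →
        c a₂ b - w b ≤ B.inf' hB (fun b' => c a₂ b' - w b') + δ := by
  classical
  intro w hw b hb happrox
  have raise (a : EuclideanSpace ℝ (Fin d)) :=
    Finset.sub_le_inf'_sub_add_iff_eq_inf'_sub_update hB hb (c a) w hδ.le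
  exact (raise a₂).2 <|
    (hcell _ (exists_nat_mul_update_add hw b) b hb).1 ((raise a₁).1 happrox)

/-- If `a₁` and `a₂` have the same weighted nearest neighbors in `B` with respect to every
weight function whose values are nonnegative integer multiples of `δ`, then every
`δ`-approximate weighted nearest neighbor of `a₁` (with respect to such a weight function)
is also a `δ`-approximate weighted nearest neighbor of `a₂`. -/
theorem same_wnn_implies_same_approx_wnn {d : ℕ}
    (B : Finset (EuclideanSpace ℝ (Fin d))) (hB : B.Nonempty)
    (c : EuclideanSpace ℝ (Fin d) → EuclideanSpace ℝ (Fin d) → ℝ)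
    (hc0 : ∀ x y, 0 ≤ c x y)
    (δ : ℝ) (hδ : 0 < δ)
    (a₁ a₂ : EuclideanSpace ℝ (Fin d))
    (hcell : ∀ w : EuclideanSpace ℝ (Fin d) → ℝ,
      (∀ b ∈ B, ∃ k : ℕ, w b = (k : ℝ) * δ) → ∀ b ∈ B,
        (c a₁ b - w b = B.inf' hB (fun b' => c a₁ b' - w b') ↔
         c a₂ b - w b = B.inf' hB (fun b' => c a₂ b' - w b'))) :
    ∀ w : EuclideanSpace ℝ (Fin d) → ℝ,
      (∀ b ∈ B, ∃ k : ℕ, w b = (k : ℝ) * δ) → ∀ b ∈ B,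
        c a₁ b - w b ≤ B.inf' hB (fun b' => c a₁ b' - w b') + δ →
        c a₂ b - w b ≤ B.inf' hB (fun b' => c a₂ b' - w b') + δ :=
  same_wnn_implies_same_approx_wnn_general B hB c δ hδ a₁ a₂ hcell
end

section
/- Let B ⊂ ℝ^d be a finite set, let c : ℝ^d × ℝ^d → ℝ≥0 be a ground cost, let δ > 0, and let y : B → ℝ be dual weights whose values are nonnegative integer multiples of 2δ. Let a₁, a₂ ∈ ℝ^d be such that for every weight function w : B → ℝ with values nonnegative integer multiples of 2δ and every b ∈ B, b is a weighted nearest neighbor of a₁ with respect to w if and only if b is a weighted nearest neighbor of a₂ with respect to w. Define y_{2δ}(a₂) = max_{b'∈B}( y(b') − c(a₂, b') ) − 2δ, and for b ∈ B define the slack s_δ(a₁, b) = ⌊( c_y(a₁,b) − min_{b'∈B} c_y(a₁,b') ) / δ⌋ · δ, where c_y(x,b) = c(x,b) − y(b). If b ∈ B satisfies c(a₂, b) ≤ y(b) − y_{2δ}(a₂), then s_δ(a₁, b) ≤ 4δ. -/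
/-!
Raise the weight of `b` by `2δ`, giving the weight function `w = y + 2δ·𝟙_b`, still a
vector of nonnegative multiples of `2δ`. The `2δ`-optimality condition at `a₂` says precisely
that `b` is a weighted nearest neighbour of `a₂` with respect to `w`, so by the cell hypothesis
it is one of `a₁` as well. Undoing the bump, `c_y(a₁, b)` exceeds `min_{b'} c_y(a₁, b')` by at
most `2δ`, and rounding down to a multiple of `δ` only decreases this slack.
-/

namespace Finset

variable {β : Type*} {B : Finset β} (hB : B.Nonempty)

theorem eq_inf'_iff_forall_le_s5 (g : β → ℝ) {b : β} (hb : b ∈ B) :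
    g b = B.inf' hB g ↔ ∀ b' ∈ B, g b ≤ g b' :=
  ⟨fun h => h ▸ (le_inf'_iff hB g).mp le_rfl,
    fun h => le_antisymm ((le_inf'_iff hB g).mpr h) (inf'_le g hb)⟩

theorem sub_inf'_le_of_forall_sub_le (g : β → ℝ) {b : β} {t : ℝ}
    (h : ∀ b' ∈ B, g b - t ≤ g b') : g b - B.inf' hB g ≤ t := by
  obtain ⟨b₀, hb₀, hmin⟩ := exists_mem_eq_inf' hB g
  linarith [h b₀ hb₀]

theorem forall_sub_sub_le_of_le_sub_sup' {f y : β → ℝ} {b : β} {t : ℝ}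
    (h : f b ≤ y b - (B.sup' hB (fun b' => y b' - f b') - t)) :
    ∀ b' ∈ B, f b - y b - t ≤ f b' - y b' := fun b' hb' => by
  linarith [le_sup' (fun b' => y b' - f b') hb']

end Finset

section WeightBump

variable {β : Type*} [DecidableEq β]

theorem forall_exists_nat_mul_update_add {B : Finset β} {y : β → ℝ} {t : ℝ}
    (hy : ∀ b ∈ B, ∃ k : ℕ, y b = k * t) (b : β) :
    ∀ b' ∈ B, ∃ k : ℕ, Function.update y b (y b + t) b' = k * t := by
  intro b' hb'
  obtain ⟨k, hk⟩ := hy b' hb'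
  by_cases h : b' = b
  · subst h
    exact ⟨k + 1, by rw [Function.update_self, hk]; push_cast; ring⟩
  · exact ⟨k, by rw [Function.update_of_ne h, hk]⟩

theorem forall_sub_update_le_iff {B : Finset β} {f y : β → ℝ} {b : β} {t : ℝ} (ht : 0 ≤ t) :
    (∀ b' ∈ B, f b - Function.update y b (y b + t) b ≤ f b' - Function.update y b (y b + t) b')
      ↔ ∀ b' ∈ B, f b - y b - t ≤ f b' - y b' := by
  refine forall₂_congr fun b' _ => ?_
  by_cases h : b' = b
  · subst h
    simp only [Function.update_self]
    constructor <;> intro <;> linarith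
  · rw [Function.update_self, Function.update_of_ne h, sub_add_eq_sub_sub]

end WeightBump

theorem Int.floor_div_mul_le {x δ : ℝ} (hδ : 0 < δ) : (⌊x / δ⌋ : ℝ) * δ ≤ x :=
  (le_div_iff₀ hδ).mp (Int.floor_le _)

theorem slack_le_four_delta_general {d : ℕ}
    (B : Finset (EuclideanSpace ℝ (Fin d))) (hB : B.Nonempty)
    (c : EuclideanSpace ℝ (Fin d) → EuclideanSpace ℝ (Fin d) → ℝ)
    (δ : ℝ) (hδ : 0 < δ)
    (y : EuclideanSpace ℝ (Fin d) → ℝ)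
    (hy : ∀ b ∈ B, ∃ k : ℕ, y b = (k : ℝ) * (2 * δ))
    (a₁ a₂ : EuclideanSpace ℝ (Fin d))
    (hcell : ∀ w : EuclideanSpace ℝ (Fin d) → ℝ,
      (∀ b ∈ B, ∃ k : ℕ, w b = (k : ℝ) * (2 * δ)) → ∀ b ∈ B,
        (c a₁ b - w b = B.inf' hB (fun b' => c a₁ b' - w b') ↔
         c a₂ b - w b = B.inf' hB (fun b' => c a₂ b' - w b')))
    (b : EuclideanSpace ℝ (Fin d)) (hb : b ∈ B)
    (hopt : c a₂ b ≤ y b - (B.sup' hB (fun b' => y b' - c a₂ b') - 2 * δ)) :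
    (⌊((c a₁ b - y b) - B.inf' hB (fun b' => c a₁ b' - y b')) / δ⌋ : ℝ) * δ ≤ 4 * δ := by
  classical
  have h2δ : (0 : ℝ) ≤ 2 * δ := by positivity
  set w := Function.update y b (y b + 2 * δ)
  have hnn₂ : c a₂ b - w b = B.inf' hB (fun b' => c a₂ b' - w b') :=
    (Finset.eq_inf'_iff_forall_le_s5 hB (fun b' => c a₂ b' - w b') hb).mpr <|
      (forall_sub_update_le_iff h2δ).mpr <| Finset.forall_sub_sub_le_of_le_sub_sup' hB hopt
  have hnn₁ : c a₁ b - w b = B.inf' hB (fun b' => c a₁ b' - w b') :=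
    (hcell w (forall_exists_nat_mul_update_add hy b) b hb).mpr hnn₂
  have hslack : (c a₁ b - y b) - B.inf' hB (fun b' => c a₁ b' - y b') ≤ 2 * δ :=
    Finset.sub_inf'_le_of_forall_sub_le hB (fun b' => c a₁ b' - y b') <|
      (forall_sub_update_le_iff h2δ).mp <|
        (Finset.eq_inf'_iff_forall_le_s5 hB (fun b' => c a₁ b' - w b') hb).mp hnn₁
  calc _ ≤ (c a₁ b - y b) - B.inf' hB (fun b' => c a₁ b' - y b') := Int.floor_div_mul_le hδ
    _ ≤ 2 * δ := hslack
    _ ≤ 4 * δ := by linarith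

/-- If `a₁` and `a₂` lie in the same cell of the arrangement of all weighted Voronoi
diagrams over weight vectors with values nonnegative integer multiples of `2δ`, the dual
weights `y` take values nonnegative integer multiples of `2δ`, and `b` satisfies the
`2δ`-optimality condition `c(a₂,b) ≤ y(b) - y_{2δ}(a₂)` where
`y_{2δ}(a₂) = max_{b'}(y b' - c a₂ b') - 2δ`, then the slack
`s_δ(a₁,b) = ⌊(c_y(a₁,b) - min_{b'} c_y(a₁,b'))/δ⌋·δ` is at most `4δ`. -/
theorem slack_le_four_delta {d : ℕ}
    (B : Finset (EuclideanSpace ℝ (Fin d))) (hB : B.Nonempty)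
    (c : EuclideanSpace ℝ (Fin d) → EuclideanSpace ℝ (Fin d) → ℝ)
    (hc0 : ∀ x y, 0 ≤ c x y)
    (δ : ℝ) (hδ : 0 < δ)
    (y : EuclideanSpace ℝ (Fin d) → ℝ)
    (hy : ∀ b ∈ B, ∃ k : ℕ, y b = (k : ℝ) * (2 * δ))
    (a₁ a₂ : EuclideanSpace ℝ (Fin d))
    (hcell : ∀ w : EuclideanSpace ℝ (Fin d) → ℝ,
      (∀ b ∈ B, ∃ k : ℕ, w b = (k : ℝ) * (2 * δ)) → ∀ b ∈ B,
        (c a₁ b - w b = B.inf' hB (fun b' => c a₁ b' - w b') ↔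
         c a₂ b - w b = B.inf' hB (fun b' => c a₂ b' - w b')))
    (b : EuclideanSpace ℝ (Fin d)) (hb : b ∈ B)
    (hopt : c a₂ b ≤ y b - (B.sup' hB (fun b' => y b' - c a₂ b') - 2 * δ)) :
    (⌊((c a₁ b - y b) - B.inf' hB (fun b' => c a₁ b' - y b')) / δ⌋ : ℝ) * δ ≤ 4 * δ :=
  slack_le_four_delta_general B hB c δ hδ y hy a₁ a₂ hcell b hb hopt
end

section
/- Let B ⊂ ℝ^d be a finite set, let c : ℝ^d × ℝ^d → ℝ≥0 be a ground cost, and let δ > 0. Let a₁, a₂ ∈ ℝ^d be such that for every weight function w : B → ℝ whose values are nonnegative integer multiples of 2δ and every b ∈ B, b is a weighted nearest neighbor of a₁ with respect to w if and only if b is a weighted nearest neighbor of a₂ with respect to w. Then for every pair of points b₁, b₂ ∈ B, ⌊( c(a₁,b₁) − c(a₁,b₂) ) / δ⌋ · δ ≤ ⌊( c(a₂,b₁) − c(a₂,b₂) ) / δ⌋ · δ + 2δ. -/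
/-!
Fix a grid step `ε = 2δ` and an integer `k`. Put weight `m₁ε` on `b₁`, weight `m₂ε` on `b₂` and
weight `0` elsewhere, where `m₁ - m₂ = k` and `m₂` is large: then only `b₁` and `b₂` can be nearest,
and `b₁` is a weighted nearest neighbour of `a` exactly when `c(a,b₁) - c(a,b₂) ≤ kε`. Since `a₁`
and `a₂` have the same weighted nearest neighbours, the difference `c(a,b₁) - c(a,b₂)` lies below
the same grid points `kε` for both points. Taking for `kε` the first grid point above the
difference at `a₂` bounds the difference at `a₁` by the one at `a₂` plus `2δ`, and rounding down
to multiples of `δ` preserves this bound.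
-/

noncomputable section

theorem Finset.apply_eq_inf'_iff_le {α β : Type*} [SemilatticeInf β] {s : Finset α}
    (hs : s.Nonempty) {g : α → β} {b₁ b₂ : α} (hb₁ : b₁ ∈ s) (hb₂ : b₂ ∈ s)
    (hrest : ∀ b ∈ s, b ≠ b₁ → g b₂ ≤ g b) :
    g b₁ = s.inf' hs g ↔ g b₁ ≤ g b₂ := by
  refine ⟨fun h => h ▸ s.inf'_le g hb₂, fun h => le_antisymm ?_ (s.inf'_le g hb₁)⟩
  refine s.le_inf' hs g fun b hb => ?_
  rcases eq_or_ne b b₁ with rfl | hb₁'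
  · exact le_rfl
  · exact h.trans (hrest b hb hb₁')

theorem exists_intCast_mul_mem_Ico {ε : ℝ} (hε : 0 < ε) (y : ℝ) :
    ∃ k : ℤ, y ≤ k * ε ∧ k * ε < y + ε := by
  obtain ⟨k, ⟨hle, hlt⟩, -⟩ := existsUnique_add_zsmul_mem_Ico hε 0 y
  exact ⟨k, by simpa using hle, by simpa using hlt⟩

theorem floor_div_mul_le_floor_div_mul_add {δ x y : ℝ} (hδ : 0 < δ) (n : ℤ)
    (h : x ≤ y + n * δ) :
    (⌊x / δ⌋ : ℝ) * δ ≤ ⌊y / δ⌋ * δ + n * δ := by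
  have hdiv : x / δ ≤ y / δ + n := by
    rwa [div_add' _ _ _ hδ.ne', div_le_div_iff_of_pos_right hδ]
  have hfloor : ⌊x / δ⌋ ≤ ⌊y / δ⌋ + n := by
    simpa only [Int.floor_add_intCast] using Int.floor_le_floor hdiv
  rw [← add_mul]
  gcongr
  exact_mod_cast hfloor

namespace WeightedVoronoi

variable {X α : Type*}

def pairWeight [DecidableEq α] (b₁ b₂ : α) (W₁ W₂ : ℝ) : α → ℝ :=
  fun b => if b = b₁ then W₁ else if b = b₂ then W₂ else 0

theorem pairWeight_mem_grid [DecidableEq α] (b₁ b₂ : α) (m₁ m₂ : ℕ) (ε : ℝ) (b : α) :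
    ∃ k : ℕ, pairWeight b₁ b₂ (m₁ * ε) (m₂ * ε) b = k * ε := by
  unfold pairWeight
  split_ifs
  exacts [⟨m₁, rfl⟩, ⟨m₂, rfl⟩, ⟨0, by simp⟩]

theorem sub_pairWeight_eq_inf'_iff [DecidableEq α] {s : Finset α} (hs : s.Nonempty)
    {f : α → ℝ} (hf : ∀ b ∈ s, 0 ≤ f b) {b₁ b₂ : α} (hb₁ : b₁ ∈ s) (hb₂ : b₂ ∈ s)
    (hne : b₁ ≠ b₂) {W₁ W₂ : ℝ} (hW₂ : f b₂ ≤ W₂) :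
    f b₁ - pairWeight b₁ b₂ W₁ W₂ b₁ =
        s.inf' hs (fun b => f b - pairWeight b₁ b₂ W₁ W₂ b) ↔
      f b₁ - f b₂ ≤ W₁ - W₂ := by
  have hw₁ : pairWeight b₁ b₂ W₁ W₂ b₁ = W₁ := if_pos rfl
  have hw₂ : pairWeight b₁ b₂ W₁ W₂ b₂ = W₂ := by simp [pairWeight, hne.symm]
  refine (Finset.apply_eq_inf'_iff_le (g := fun b => f b - pairWeight b₁ b₂ W₁ W₂ b) hs hb₁ hb₂
    fun b hb hbb₁ => ?_).trans ?_
  · rcases eq_or_ne b b₂ with rfl | hbb₂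
    · exact le_rfl
    · have hw : pairWeight b₁ b₂ W₁ W₂ b = 0 := by simp [pairWeight, hbb₁, hbb₂]
      simp only [hw, hw₂]
      linarith [hf b hb]
  · simp only [hw₁, hw₂]
    constructor <;> intro h <;> linarith

def SameWeightedVoronoiCell (s : Finset α) (hs : s.Nonempty) (c : X → α → ℝ) (ε : ℝ)
    (a₁ a₂ : X) : Prop :=
  ∀ w : α → ℝ, (∀ b ∈ s, ∃ k : ℕ, w b = k * ε) → ∀ b ∈ s,
    (c a₁ b - w b = s.inf' hs (fun b' => c a₁ b' - w b') ↔
     c a₂ b - w b = s.inf' hs (fun b' => c a₂ b' - w b'))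

theorem SameWeightedVoronoiCell.sub_le_intCast_mul {s : Finset α} {hs : s.Nonempty}
    {c : X → α → ℝ} (hc : ∀ a, ∀ b ∈ s, 0 ≤ c a b) {ε : ℝ} (hε : 0 < ε) {a₁ a₂ : X}
    (hcell : SameWeightedVoronoiCell s hs c ε a₁ a₂) {b₁ b₂ : α} (hb₁ : b₁ ∈ s)
    (hb₂ : b₂ ∈ s) (k : ℤ) (hk : c a₂ b₁ - c a₂ b₂ ≤ k * ε) :
    c a₁ b₁ - c a₁ b₂ ≤ k * ε := by
  classical
  rcases eq_or_ne b₁ b₂ with rfl | hne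
  · simpa using hk
  obtain ⟨N, hN⟩ := Archimedean.arch (max (c a₁ b₂) (c a₂ b₂)) hε
  rw [nsmul_eq_mul] at hN
  set m₁ := k.toNat + N
  set m₂ := (-k).toNat + N
  have hm : (m₁ : ℝ) * ε - m₂ * ε = k * ε := by
    rw [← sub_mul]
    congr 1
    exact_mod_cast (by omega : ((m₁ : ℤ) - m₂) = k)
  have hNm₂ : (N : ℝ) * ε ≤ m₂ * ε := by gcongr; omega
  have hwnn : ∀ a, c a b₂ ≤ max (c a₁ b₂) (c a₂ b₂) →
      (c a b₁ - pairWeight b₁ b₂ (m₁ * ε) (m₂ * ε) b₁ =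
          s.inf' hs (fun b => c a b - pairWeight b₁ b₂ (m₁ * ε) (m₂ * ε) b) ↔
        c a b₁ - c a b₂ ≤ k * ε) := fun a ha => by
    rw [sub_pairWeight_eq_inf'_iff hs (hc a) hb₁ hb₂ hne (by linarith), hm]
  refine (hwnn a₁ (le_max_left _ _)).1 ?_
  refine (hcell _ (fun b _ => pairWeight_mem_grid b₁ b₂ m₁ m₂ ε b) b₁ hb₁).2 ?_
  exact (hwnn a₂ (le_max_right _ _)).2 hk

end WeightedVoronoi

/-- If `a₁` and `a₂` lie in the same cell of the arrangement of all weighted Voronoi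
diagrams over weight vectors with values nonnegative integer multiples of `2δ`, then for any
`b₁, b₂ ∈ B`,
`⌊(c(a₁,b₁) - c(a₁,b₂))/δ⌋·δ ≤ ⌊(c(a₂,b₁) - c(a₂,b₂))/δ⌋·δ + 2δ`. -/
theorem floor_distance_difference {d : ℕ}
    (B : Finset (EuclideanSpace ℝ (Fin d))) (hB : B.Nonempty)
    (c : EuclideanSpace ℝ (Fin d) → EuclideanSpace ℝ (Fin d) → ℝ)
    (hc0 : ∀ x y, 0 ≤ c x y)
    (δ : ℝ) (hδ : 0 < δ)
    (a₁ a₂ : EuclideanSpace ℝ (Fin d))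
    (hcell : ∀ w : EuclideanSpace ℝ (Fin d) → ℝ,
      (∀ b ∈ B, ∃ k : ℕ, w b = (k : ℝ) * (2 * δ)) → ∀ b ∈ B,
        (c a₁ b - w b = B.inf' hB (fun b' => c a₁ b' - w b') ↔
         c a₂ b - w b = B.inf' hB (fun b' => c a₂ b' - w b'))) :
    ∀ b₁ ∈ B, ∀ b₂ ∈ B,
      (⌊(c a₁ b₁ - c a₁ b₂) / δ⌋ : ℝ) * δ ≤ (⌊(c a₂ b₁ - c a₂ b₂) / δ⌋ : ℝ) * δ + 2 * δ := by
  intro b₁ hb₁ b₂ hb₂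
  have h2δ : 0 < 2 * δ := by positivity
  obtain ⟨k, hk_ge, hk_lt⟩ := exists_intCast_mul_mem_Ico h2δ (c a₂ b₁ - c a₂ b₂)
  have hk₁ : c a₁ b₁ - c a₁ b₂ ≤ k * (2 * δ) :=
    WeightedVoronoi.SameWeightedVoronoiCell.sub_le_intCast_mul (fun a b _ => hc0 a b) h2δ
      hcell hb₁ hb₂ k hk_ge
  simpa using floor_div_mul_le_floor_div_mul_add hδ 2 (by push_cast; linarith)

end
end

section
/- Let X and B be disjoint finite sets and let σ₁, σ₂ : X × B → ℝ≥0 be two functions with identical marginals, i.e., Σ_{b∈B} σ₁(r,b) = Σ_{b∈B} σ₂(r,b) for every r ∈ X, and Σ_{r∈X} σ₁(r,b) = Σ_{r∈X} σ₂(r,b) for every b ∈ B. Define the residual digraph G on the vertex set X ∪ B as follows: for each pair (r,b) ∈ X × B, if σ₁(r,b) > σ₂(r,b) there is a directed edge from b to r, and if σ₁(r,b) < σ₂(r,b) there is a directed edge from r to b. Then every directed edge of G is contained in a simple directed cycle of G. -/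
/-!
Orient the difference `σ₂ - σ₁` from `X` to `B` (and its negative from `B` to `X`). This is a
circulation on `X ⊕ B`: it is antisymmetric, and equal marginals mean zero net outflow at every
vertex. The residual edges are exactly the edges of positive flow. If such an edge `u → v` were
not followed by a path back to `u`, the set of vertices reachable from `v` would have zero net
outflow, although no flow leaves it positively and the flow from `v` to `u` is negative. Cutting
the loops out of a path from `v` to `u` then closes a simple cycle.
-/

/-- The residual digraph of two transport plans `σ₁, σ₂ : X × B → ℝ≥0` on the vertex set
`X ⊕ B`: there is an edge from `b` to `r` when `σ₁(r,b) > σ₂(r,b)` and an edge from `r` to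
`b` when `σ₁(r,b) < σ₂(r,b)`. -/
def residualAdj {X B : Type*} (σ₁ σ₂ : X → B → ℝ) : X ⊕ B → X ⊕ B → Prop
  | Sum.inr b, Sum.inl r => σ₂ r b < σ₁ r b
  | Sum.inl r, Sum.inr b => σ₁ r b < σ₂ r b
  | _, _ => False

section SimpleCycle

variable {α : Type*} {r : α → α → Prop}

theorem exists_nodup_isChain_of_reflTransGen {a b : α} (h : Relation.ReflTransGen r a b) :
    ∃ l : List α, List.IsChain r (a :: l) ∧
      (a :: l).getLast (List.cons_ne_nil _ _) = b ∧ (a :: l).Nodup := by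
  induction h using Relation.ReflTransGen.head_induction_on with
  | refl => exact ⟨[], .singleton _, rfl, List.nodup_singleton _⟩
  | @head a c hac _ ih =>
    obtain ⟨l, hchain, hlast, hnodup⟩ := ih
    by_cases ha : a ∈ c :: l
    · -- cut out the loop: restart the path at the occurrence of `a` in it
      obtain ⟨p, q, hpq⟩ := List.append_of_mem ha
      have hsuffix : a :: q <:+ c :: l := hpq ▸ List.suffix_append p (a :: q)
      refine ⟨q, hchain.suffix hsuffix, ?_, hnodup.sublist hsuffix.sublist⟩
      rw [← hlast, List.getLast_congr _ (by simp) hpq, List.getLast_append_right]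
    · exact ⟨c :: l, hchain.cons_cons hac, hlast, List.nodup_cons.2 ⟨ha, hnodup⟩⟩

theorem exists_simple_cycle_of_reflTransGen {u v : α} (huv : r u v)
    (hvu : Relation.ReflTransGen r v u) (hne : u ≠ v) :
    ∃ l : List α, List.IsChain r (u :: v :: l ++ [u]) ∧ (u :: v :: l).Nodup := by
  obtain ⟨l, hchain, hlast, hnodup⟩ := exists_nodup_isChain_of_reflTransGen hvu
  obtain rfl | ⟨m, w, rfl⟩ := l.eq_nil_or_concat'
  · exact absurd hlast.symm hne
  have hw : w = u := by simpa using hlast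
  subst w
  exact ⟨m, hchain.cons_cons huv, (List.perm_append_singleton u (v :: m)).nodup_iff.1 hnodup⟩

end SimpleCycle

section Circulation

open Finset

variable {V : Type*} {F : V → V → ℝ}

theorem sum_sum_eq_zero_of_antisymm (hF : ∀ x y, F x y = -F y x) (s : Finset V) :
    ∑ x ∈ s, ∑ y ∈ s, F x y = 0 := by
  have hswap : ∑ x ∈ s, ∑ y ∈ s, F x y = -∑ x ∈ s, ∑ y ∈ s, F x y := calc
    _ = ∑ x ∈ s, ∑ y ∈ s, -F y x := sum_congr rfl fun _ _ => sum_congr rfl fun _ _ => hF _ _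
    _ = -∑ y ∈ s, ∑ x ∈ s, F y x := by rw [sum_comm]; simp only [sum_neg_distrib]
  linarith

theorem sum_sum_compl_eq_zero_of_circulation [Fintype V] [DecidableEq V]
    (hF : ∀ x y, F x y = -F y x) (hcons : ∀ x, ∑ y, F x y = 0) (s : Finset V) :
    ∑ x ∈ s, ∑ y ∈ sᶜ, F x y = 0 := by
  have htotal : ∑ x ∈ s, ∑ y, F x y = 0 := sum_eq_zero fun x _ => hcons x
  simp only [← sum_add_sum_compl s (F _), sum_add_distrib,
    sum_sum_eq_zero_of_antisymm hF s, zero_add] at htotal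
  exact htotal

theorem reflTransGen_of_pos_of_circulation [Fintype V] (hF : ∀ x y, F x y = -F y x)
    (hcons : ∀ x, ∑ y, F x y = 0) {u v : V} (huv : 0 < F u v) :
    Relation.ReflTransGen (fun x y => 0 < F x y) v u := by
  classical
  by_contra hvu
  set S : Finset V := {x | Relation.ReflTransGen (fun x y => 0 < F x y) v x}
  have hvS : v ∈ S := by simp [S, Relation.ReflTransGen.refl]
  have huS : u ∈ Sᶜ := by simpa [S] using hvu
  have hout_nonpos : ∀ x ∈ S, ∀ y ∈ Sᶜ, F x y ≤ 0 := by
    intro x hx y hy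
    by_contra! hxy
    simp only [S, mem_compl, mem_filter, mem_univ, true_and] at hx hy
    exact hy (hx.tail hxy)
  have hvu_neg : F v u < 0 := by linarith [hF v u]
  have hout_neg : ∑ x ∈ S, ∑ y ∈ Sᶜ, F x y < 0 :=
    sum_neg' (fun x hx => sum_nonpos (hout_nonpos x hx))
      ⟨v, hvS, sum_neg' (hout_nonpos v hvS) ⟨u, huS, hvu_neg⟩⟩
  linarith [sum_sum_compl_eq_zero_of_circulation hF hcons S]

theorem exists_simple_cycle_of_pos_of_circulation [Fintype V] (hF : ∀ x y, F x y = -F y x)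
    (hcons : ∀ x, ∑ y, F x y = 0) {u v : V} (huv : 0 < F u v) :
    ∃ l : List V, List.IsChain (fun x y => 0 < F x y) (u :: v :: l ++ [u]) ∧
      (u :: v :: l).Nodup :=
  exists_simple_cycle_of_reflTransGen huv (reflTransGen_of_pos_of_circulation hF hcons huv)
    fun h => by subst h; linarith [hF u u]

end Circulation

section Residual

variable {X B : Type*}

def residualFlow (σ₁ σ₂ : X → B → ℝ) : X ⊕ B → X ⊕ B → ℝ
  | Sum.inr b, Sum.inl r => σ₁ r b - σ₂ r b
  | Sum.inl r, Sum.inr b => σ₂ r b - σ₁ r b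
  | _, _ => 0

theorem residualAdj_eq_pos_residualFlow (σ₁ σ₂ : X → B → ℝ) :
    residualAdj σ₁ σ₂ = fun x y => 0 < residualFlow σ₁ σ₂ x y := by
  ext (x | x) (y | y) <;> simp [residualAdj, residualFlow]

theorem residualFlow_antisymm (σ₁ σ₂ : X → B → ℝ) (x y : X ⊕ B) :
    residualFlow σ₁ σ₂ x y = -residualFlow σ₁ σ₂ y x := by
  rcases x with x | x <;> rcases y with y | y <;> simp [residualFlow]

theorem sum_residualFlow_eq_zero [Fintype X] [Fintype B] {σ₁ σ₂ : X → B → ℝ}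
    (hrow : ∀ r : X, ∑ b : B, σ₁ r b = ∑ b : B, σ₂ r b)
    (hcol : ∀ b : B, ∑ r : X, σ₁ r b = ∑ r : X, σ₂ r b) (x : X ⊕ B) :
    ∑ y, residualFlow σ₁ σ₂ x y = 0 := by
  rcases x with r | b <;>
    simp [Fintype.sum_sum_type, residualFlow, Finset.sum_sub_distrib, hrow, hcol]

end Residual

theorem residual_edge_in_simple_cycle_general {X B : Type*} [Fintype X] [Fintype B]
    (σ₁ σ₂ : X → B → ℝ)
    (hrow : ∀ r : X, ∑ b : B, σ₁ r b = ∑ b : B, σ₂ r b)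
    (hcol : ∀ b : B, ∑ r : X, σ₁ r b = ∑ r : X, σ₂ r b) :
    ∀ u v : X ⊕ B, residualAdj σ₁ σ₂ u v →
      ∃ l : List (X ⊕ B),
        List.Chain (residualAdj σ₁ σ₂) u (v :: l ++ [u]) ∧ (u :: v :: l).Nodup := by
  rw [residualAdj_eq_pos_residualFlow]
  intro u v huv
  exact exists_simple_cycle_of_pos_of_circulation (residualFlow_antisymm σ₁ σ₂)
    (sum_residualFlow_eq_zero hrow hcol) huv

/-- If `σ₁` and `σ₂` are two nonnegative functions on `X × B` with identical row and column
marginals, then every directed edge of their residual digraph is contained in a simple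
directed cycle: there is a closed directed walk starting with that edge whose vertices are
pairwise distinct (except that it returns to its starting vertex). -/
theorem residual_edge_in_simple_cycle {X B : Type*} [Fintype X] [Fintype B]
    (σ₁ σ₂ : X → B → ℝ)
    (h₁ : ∀ r b, 0 ≤ σ₁ r b) (h₂ : ∀ r b, 0 ≤ σ₂ r b)
    (hrow : ∀ r : X, ∑ b : B, σ₁ r b = ∑ b : B, σ₂ r b)
    (hcol : ∀ b : B, ∑ r : X, σ₁ r b = ∑ r : X, σ₂ r b) :
    ∀ u v : X ⊕ B, residualAdj σ₁ σ₂ u v →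
      ∃ l : List (X ⊕ B),
        List.Chain (residualAdj σ₁ σ₂) u (v :: l ++ [u]) ∧ (u :: v :: l).Nodup :=
  residual_edge_in_simple_cycle_general σ₁ σ₂ hrow hcol
end

section
/- Let μ be a compactly supported Borel probability measure on ℝ^d, let B ⊂ ℝ^d be a finite set, let ν be a probability distribution on B, and let ε ∈ (0,1). Let X ⊆ ℝ^d be a measurable set such that every a ∈ X satisfies ‖a − b₁‖ ≥ (1/ε)‖b₁ − b₂‖ for all b₁, b₂ ∈ B. Then for any two transport plans τ and τ̃ from μ to ν, Σ_{b∈B} ∫_X ‖a − b‖ dτ_b(a) ≤ (1+ε) Σ_{b∈B} ∫_X ‖a − b‖ dτ̃_b(a), where ‖·‖ denotes the Euclidean norm. -/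
/-! Seen from a point `a` of `X`, all points of `B` are at the same distance up to a factor
`1 + ε`, so `‖a - b‖` is within that factor of `infDist a B` whichever `b` receives the mass at
`a`. Hence the cost on `X` of any plan lies between `∫_X infDist · B dμ` and `1 + ε` times it,
and this integral does not depend on the plan. -/

open MeasureTheory
open scoped ENNReal

noncomputable section

open Metric

theorem Metric.dist_le_one_add_mul_infDist {α : Type*} [PseudoMetricSpace α] {B : Set α}
    (hB : IsCompact B) {a : α} {ε : ℝ}
    (hfar : ∀ b₁ ∈ B, ∀ b₂ ∈ B, dist b₁ b₂ ≤ ε * dist a b₁) {b : α} (hb : b ∈ B) :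
    dist a b ≤ (1 + ε) * infDist a B := by
  obtain ⟨b', hb', hab'⟩ := hB.exists_infDist_eq_dist ⟨b, hb⟩ a
  calc dist a b ≤ dist a b' + dist b' b := dist_triangle _ _ _
    _ ≤ dist a b' + ε * dist a b' := by gcongr; exact hfar b' hb' b hb
    _ = (1 + ε) * infDist a B := by rw [hab']; ring

section

variable {α ι : Type*} [MeasurableSpace α]

theorem Continuous.integrable_of_measure_compl_eq_zero_s10 [TopologicalSpace α]
    [OpensMeasurableSpace α] [T2Space α] {E : Type*} [NormedAddCommGroup E]
    {μ : Measure α} [IsFiniteMeasure μ] {K : Set α} (hK : IsCompact K) (hμK : μ Kᶜ = 0)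
    {f : α → E} (hf : Continuous f) : Integrable f μ := by
  have hμ : μ.restrict K = μ := Measure.restrict_eq_self_of_ae_mem (ae_iff.2 hμK)
  simpa only [IntegrableOn, hμ] using hf.continuousOn.integrableOn_compact (μ := μ) hK

theorem Measure.le_of_finset_sum_eq {μ : Measure α} {s : Finset ι} {σ : ι → Measure α}
    (hσ : ∑ i ∈ s, σ i = μ) {i : ι} (hi : i ∈ s) : σ i ≤ μ :=
  hσ ▸ Finset.single_le_sum (fun _ _ => Measure.zero_le _) hi

theorem setIntegral_eq_finset_sum_of_sum_eq {μ : Measure α} {s : Finset ι}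
    {σ : ι → Measure α} (hσ : ∑ i ∈ s, σ i = μ) {X : Set α} (hX : MeasurableSet X)
    {f : α → ℝ} (hf : IntegrableOn f X μ) :
    ∫ a in X, f a ∂μ = ∑ i ∈ s, ∫ a in X, f a ∂σ i := by
  have hfX : Integrable (X.indicator f) μ := (integrable_indicator_iff hX).2 hf
  simp only [← integral_indicator hX]
  subst hσ
  exact integral_finsetSum_measure fun i hi =>
    hfX.mono_measure (Measure.le_of_finset_sum_eq rfl hi)

theorem finset_sum_setIntegral_le_mul_of_sum_eq {μ : Measure α} {s : Finset ι}
    {σ σ' : ι → Measure α} (hσ : ∑ i ∈ s, σ i = μ) (hσ' : ∑ i ∈ s, σ' i = μ)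
    {X : Set α} (hX : MeasurableSet X) {c : ι → α → ℝ} {g : α → ℝ} {C : ℝ} (hC : 0 ≤ C)
    (hc : ∀ i ∈ s, Integrable (c i) μ) (hg : Integrable g μ)
    (hgc : ∀ i ∈ s, ∀ a ∈ X, g a ≤ c i a) (hcg : ∀ i ∈ s, ∀ a ∈ X, c i a ≤ C * g a) :
    ∑ i ∈ s, ∫ a in X, c i a ∂σ i ≤ C * ∑ i ∈ s, ∫ a in X, c i a ∂σ' i := by
  have hint : ∀ {τ : ι → Measure α}, ∑ i ∈ s, τ i = μ → ∀ {f : α → ℝ}, Integrable f μ →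
      ∀ i ∈ s, IntegrableOn f X (τ i) := fun hτ _ hf i hi =>
    (hf.mono_measure (Measure.le_of_finset_sum_eq hτ hi)).integrableOn
  have hupper : ∀ i ∈ s, ∫ a in X, c i a ∂σ i ≤ C * ∫ a in X, g a ∂σ i := fun i hi => by
    rw [← integral_const_mul]
    exact setIntegral_mono_on (hint hσ (hc i hi) i hi) ((hint hσ hg i hi).const_mul C) hX
      (hcg i hi)
  have hlower : ∀ i ∈ s, ∫ a in X, g a ∂σ' i ≤ ∫ a in X, c i a ∂σ' i := fun i hi =>
    setIntegral_mono_on (hint hσ' hg i hi) (hint hσ' (hc i hi) i hi) hX (hgc i hi)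
  calc ∑ i ∈ s, ∫ a in X, c i a ∂σ i
      ≤ C * ∑ i ∈ s, ∫ a in X, g a ∂σ i := by
        rw [Finset.mul_sum]; exact Finset.sum_le_sum hupper
    _ = C * ∑ i ∈ s, ∫ a in X, g a ∂σ' i := by
        rw [← setIntegral_eq_finset_sum_of_sum_eq hσ hX hg.integrableOn,
          setIntegral_eq_finset_sum_of_sum_eq hσ' hX hg.integrableOn]
    _ ≤ C * ∑ i ∈ s, ∫ a in X, c i a ∂σ' i :=
        mul_le_mul_of_nonneg_left (Finset.sum_le_sum hlower) hC

end

theorem far_mass_routed_arbitrarily_general {d : ℕ}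
    (μ : Measure (EuclideanSpace ℝ (Fin d))) [IsProbabilityMeasure μ]
    (hμc : ∃ K : Set (EuclideanSpace ℝ (Fin d)), IsCompact K ∧ μ Kᶜ = 0)
    (B : Finset (EuclideanSpace ℝ (Fin d)))
    (ν : EuclideanSpace ℝ (Fin d) → ℝ≥0∞)
    (ε : ℝ) (hε0 : 0 < ε)
    (X : Set (EuclideanSpace ℝ (Fin d))) (hX : MeasurableSet X)
    (hfar : ∀ a ∈ X, ∀ b₁ ∈ B, ∀ b₂ ∈ B, (1 / ε) * ‖b₁ - b₂‖ ≤ ‖a - b₁‖)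
    (τ τ' : EuclideanSpace ℝ (Fin d) → Measure (EuclideanSpace ℝ (Fin d)))
    (hτ : IsSemiDiscretePlan μ B ν τ) (hτ' : IsSemiDiscretePlan μ B ν τ') :
    ∑ b ∈ B, ∫ a in X, ‖a - b‖ ∂(τ b) ≤
      (1 + ε) * ∑ b ∈ B, ∫ a in X, ‖a - b‖ ∂(τ' b) := by
  obtain ⟨K, hK, hμK⟩ := hμc
  have hcost_le : ∀ b ∈ B, ∀ a ∈ X, ‖a - b‖ ≤ (1 + ε) * infDist a B := fun b hb a ha => by
    rw [← dist_eq_norm]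
    refine dist_le_one_add_mul_infDist B.finite_toSet.isCompact (fun b₁ hb₁ b₂ hb₂ => ?_) hb
    have h := hfar a ha b₁ hb₁ b₂ hb₂
    rw [one_div, inv_mul_le_iff₀ hε0, ← dist_eq_norm, ← dist_eq_norm] at h
    exact h
  refine finset_sum_setIntegral_le_mul_of_sum_eq hτ.1 hτ'.1 hX (by linarith)
    (fun b _ => ?_) ?_ (fun b hb a _ => ?_) hcost_le
  · exact Continuous.integrable_of_measure_compl_eq_zero_s10 hK hμK (by fun_prop)
  · exact (continuous_infDist_pt _).integrable_of_measure_compl_eq_zero_s10 hK hμK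
  · rw [← dist_eq_norm]
    exact infDist_le_dist_of_mem hb

/-- If every point of the measurable set `X` is at distance at least `(1/ε)‖b₁ - b₂‖` from
every `b₁ ∈ B` (for all `b₂ ∈ B`), then the transport cost restricted to `X` of any two
transport plans from `μ` to `ν` differ by at most a `(1+ε)` multiplicative factor. -/
theorem far_mass_routed_arbitrarily {d : ℕ}
    (μ : Measure (EuclideanSpace ℝ (Fin d))) [IsProbabilityMeasure μ]
    (hμc : ∃ K : Set (EuclideanSpace ℝ (Fin d)), IsCompact K ∧ μ Kᶜ = 0)
    (B : Finset (EuclideanSpace ℝ (Fin d)))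
    (ν : EuclideanSpace ℝ (Fin d) → ℝ≥0∞) (hν : ∑ b ∈ B, ν b = 1)
    (ε : ℝ) (hε0 : 0 < ε) (hε1 : ε < 1)
    (X : Set (EuclideanSpace ℝ (Fin d))) (hX : MeasurableSet X)
    (hfar : ∀ a ∈ X, ∀ b₁ ∈ B, ∀ b₂ ∈ B, (1 / ε) * ‖b₁ - b₂‖ ≤ ‖a - b₁‖)
    (τ τ' : EuclideanSpace ℝ (Fin d) → Measure (EuclideanSpace ℝ (Fin d)))
    (hτ : IsSemiDiscretePlan μ B ν τ) (hτ' : IsSemiDiscretePlan μ B ν τ') :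
    ∑ b ∈ B, ∫ a in X, ‖a - b‖ ∂(τ b) ≤
      (1 + ε) * ∑ b ∈ B, ∫ a in X, ‖a - b‖ ∂(τ' b) :=
  far_mass_routed_arbitrarily_general μ hμc B ν ε hε0 X hX hfar τ τ' hτ hτ'

end
end

section
/- Let ε ∈ (0, 1/2) and let x, y, b, b' ∈ ℝ^d be points with ‖b − b'‖ ≥ 1, ‖x − b‖ ≤ ε, and ‖y − b‖ ≤ ε, where ‖·‖ is the Euclidean norm. Then ‖x − b‖ + ‖y − b'‖ ≤ (1 + 6ε)‖x − b'‖ + ‖y − b‖. -/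
/-!
Routing `y` to `b'` through `b` and `x` costs at most `‖y - b‖ + ‖x - b‖ + ‖x - b'‖`, so the
swap loses at most `2‖x - b‖ ≤ 2ε`. Since `x` is `ε`-close to `b` and `b'` is at distance at
least `1` from `b`, the edge `(x, b')` has length at least `1 - ε > 1/2`, so `2ε` is at most
`6ε‖x - b'‖`.
-/

section SwapCost

variable {E : Type*} [SeminormedAddCommGroup E]

theorem norm_sub_add_norm_sub_le_swap (x y b b' : E) :
    ‖x - b‖ + ‖y - b'‖ ≤ ‖x - b'‖ + ‖y - b‖ + 2 * ‖x - b‖ := by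
  have hyb' : ‖y - b'‖ ≤ ‖y - b‖ + ‖b - x‖ + ‖x - b'‖ :=
    calc ‖y - b'‖ ≤ ‖y - b‖ + ‖b - b'‖ := norm_sub_le_norm_sub_add_norm_sub _ _ _
      _ ≤ ‖y - b‖ + (‖b - x‖ + ‖x - b'‖) := by
        gcongr; exact norm_sub_le_norm_sub_add_norm_sub _ _ _
      _ = ‖y - b‖ + ‖b - x‖ + ‖x - b'‖ := by ring
  rw [norm_sub_rev b x] at hyb'
  linarith

theorem two_mul_norm_sub_le_of_near {ε : ℝ} (hε : ε < 1 / 2) {x b b' : E}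
    (hbb' : 1 ≤ ‖b - b'‖) (hx : ‖x - b‖ ≤ ε) :
    2 * ‖x - b‖ ≤ 6 * ε * ‖x - b'‖ := by
  have hε0 : 0 ≤ ε := (norm_nonneg _).trans hx
  have hfar : 1 - ε ≤ ‖x - b'‖ := by
    have := norm_sub_le_norm_sub_add_norm_sub b x b'
    rw [norm_sub_rev b x] at this
    linarith
  nlinarith

end SwapCost

theorem exchange_inequality_local_swap_general {d : ℕ}
    (ε : ℝ) (hε1 : ε < 1 / 2)
    (x y b b' : EuclideanSpace ℝ (Fin d))
    (hbb' : 1 ≤ ‖b - b'‖) (hx : ‖x - b‖ ≤ ε) :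
    ‖x - b‖ + ‖y - b'‖ ≤ (1 + 6 * ε) * ‖x - b'‖ + ‖y - b‖ := by
  have hswap := norm_sub_add_norm_sub_le_swap x y b b'
  have hloss := two_mul_norm_sub_le_of_near hε1 hbb' hx
  linarith

/-- The exchange inequality within the `ε`-neighborhood of `b` (after normalizing so that
the distance from `b` to any other support point is at least `1`): if `ε ∈ (0, 1/2)`,
`‖b - b'‖ ≥ 1`, `‖x - b‖ ≤ ε`, and `‖y - b‖ ≤ ε`, then
`‖x - b‖ + ‖y - b'‖ ≤ (1 + 6ε)‖x - b'‖ + ‖y - b‖`. -/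
theorem exchange_inequality_local_swap {d : ℕ}
    (ε : ℝ) (hε0 : 0 < ε) (hε1 : ε < 1 / 2)
    (x y b b' : EuclideanSpace ℝ (Fin d))
    (hbb' : 1 ≤ ‖b - b'‖) (hx : ‖x - b‖ ≤ ε) (hy : ‖y - b‖ ≤ ε) :
    ‖x - b‖ + ‖y - b'‖ ≤ (1 + 6 * ε) * ‖x - b'‖ + ‖y - b‖ :=
  exchange_inequality_local_swap_general ε hε1 x y b b' hbb' hx
end
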